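/- If the finite-state widened analysis result ξ̃ is obtained by taking zero or more steps of the widened transfer relation ⤳̃Ξ starting from the initial result ({(e₀, ∅, ã_halt)}, ⊥, ⊥), and ξ̂ is a fixed point of the unbounded-stack widened transfer relation ⤳̂Ξ (i.e., ξ̂ ⤳̂Ξ ξ̂), then ξ̂ ⊒Ξ ξ̃; that is, the unbounded-stack analysis simulates (is no more precise than) the finite-state analysis: every stored value and every reachable configuration of ξ̃, together with every stack implied by its continuation address, is accounted for in ξ̂. (Theorem: Precision of analysis results.) -/

import Mathlib

/-!
Formalization of the P4F ("Pushdown Control-Flow Analysis for Free") framework: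
ANF λ-calculus syntax, the finite-state abstract machine with store-allocated
continuations (P4F continuation allocator), the store-widened analysis, the
unbounded-stack abstract machine and its widened analysis, implied stacks,
sub-step relations, finite-state and unbounded-stack paths, well-formedness,
conversion functions induced by an address bijection, and the precision
relations.
-/

namespace P4F

/-! ANF syntax: expressions, atomic expressions, lambdas. -/
mutual
inductive Exp (Var : Type) : Type where
  | letCall (y : Var) (f : AExp Var) (ae : AExp Var) (body : Exp Var)
  | ret (ae : AExp Var)
inductive AExp (Var : Type) : Type where
  | var (x : Var)
  | lam (l : Lam Var)
inductive Lam (Var : Type) : Type where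
  | mk (x : Var) (body : Exp Var)
end

variable {Var Addr HAddr : Type}

/-- Pointwise containment of set-valued stores. -/
def SubStore {A B : Type} (σ σ' : A → Set B) : Prop := ∀ a, σ a ⊆ σ' a

open Classical in
/-- Join a set-valued store with a single-point store: `σ ⊔ [a ↦ d]`. -/
noncomputable def joinOne {A B : Type} (σ : A → Set B) (a : A) (d : Set B) : A → Set B :=
  fun a' => if a' = a then σ a' ∪ d else σ a'

/-- Binding environments: partial maps from variables to addresses. -/
abbrev EnvF (Var Addr : Type) : Type := Var → Option Addr
/-- Abstract closures. -/
abbrev CloF (Var Addr : Type) : Type := Lam Var × EnvF Var Addr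
/-- Value stores. -/
abbrev StoreF (Var Addr : Type) : Type := Addr → Set (CloF Var Addr)
/-- Stack frames. -/
abbrev FrameF (Var Addr : Type) : Type := Var × Exp Var × EnvF Var Addr
/-- Continuation addresses for the P4F allocator: either the halt address
    (`none`) or a pair of a target expression and environment. -/
abbrev KAddrF (Var Addr : Type) : Type := Option (Exp Var × EnvF Var Addr)
/-- Continuations: a topmost frame paired with the address of the rest of the stack. -/
abbrev KontF (Var Addr : Type) : Type := FrameF Var Addr × KAddrF Var Addr
/-- Continuation stores. -/
abbrev KStoreF (Var Addr : Type) : Type := KAddrF Var Addr → Set (KontF Var Addr)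

def emptyEnv : EnvF Var Addr := fun _ => none
def botStore : StoreF Var Addr := fun _ => ∅
def botKStore : KStoreF Var Addr := fun _ => ∅
/-- The distinguished halt continuation address. -/
def ahalt : KAddrF Var Addr := none

open Classical in
/-- Environment extension `ρ[x ↦ a]`. -/
noncomputable def upd (ρ : EnvF Var Addr) (x : Var) (a : Addr) : EnvF Var Addr :=
  fun y => if y = x then some a else ρ y

/-- Abstract atomic-expression evaluation. -/
def aeval : AExp Var → EnvF Var Addr → StoreF Var Addr → Set (CloF Var Addr)
  | AExp.var x, ρ, σ =>
    match ρ x with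
    | some a => σ a
    | none => ∅
  | AExp.lam l, ρ, _ => {(l, ρ)}

/-- Finite-state machine states `ς̃ = (e, ρ̃, σ̃, σ̃κ, ãκ)`. -/
structure StateF (Var Addr : Type) : Type where
  e : Exp Var
  ρ : EnvF Var Addr
  σ : StoreF Var Addr
  σκ : KStoreF Var Addr
  aκ : KAddrF Var Addr

/-- The finite-state transition relation `⤳̃Σ`, parametrized by the value
    allocator; the continuation allocator is the P4F allocator
    `alloc̃κ(ς̃, e', ρ̃', σ̃') = (e', ρ̃')`. -/
inductive StepF (alloc : Var → StateF Var Addr → Addr) :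
    StateF Var Addr → StateF Var Addr → Prop where
  | call {y x : Var} {f ae : AExp Var} {e e' : Exp Var} {ρ ρlam : EnvF Var Addr}
      {σ : StoreF Var Addr} {σκ : KStoreF Var Addr} {aκ : KAddrF Var Addr} :
      (Lam.mk x e', ρlam) ∈ aeval f ρ σ →
      StepF alloc ⟨Exp.letCall y f ae e, ρ, σ, σκ, aκ⟩
        ⟨e',
         upd ρlam x (alloc x ⟨Exp.letCall y f ae e, ρ, σ, σκ, aκ⟩),
         joinOne σ (alloc x ⟨Exp.letCall y f ae e, ρ, σ, σκ, aκ⟩) (aeval ae ρ σ),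
         joinOne σκ (some (e', upd ρlam x (alloc x ⟨Exp.letCall y f ae e, ρ, σ, σκ, aκ⟩)))
           {((y, e, ρ), aκ)},
         some (e', upd ρlam x (alloc x ⟨Exp.letCall y f ae e, ρ, σ, σκ, aκ⟩))⟩
  | ret {x : Var} {ae : AExp Var} {e : Exp Var} {ρ ρκ : EnvF Var Addr}
      {σ : StoreF Var Addr} {σκ : KStoreF Var Addr} {aκ aκ' : KAddrF Var Addr} :
      ((x, e, ρκ), aκ') ∈ σκ aκ →
      StepF alloc ⟨Exp.ret ae, ρ, σ, σκ, aκ⟩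
        ⟨e, upd ρκ x (alloc x ⟨Exp.ret ae, ρ, σ, σκ, aκ⟩),
         joinOne σ (alloc x ⟨Exp.ret ae, ρ, σ, σκ, aκ⟩) (aeval ae ρ σ),
         σκ, aκ'⟩

/-- Finite-state configurations `c̃ = (e, ρ̃, ãκ)`. -/
abbrev ConfF (Var Addr : Type) : Type := Exp Var × EnvF Var Addr × KAddrF Var Addr

/-- Widened state spaces `ξ̃ = (r̃, σ̃, σ̃κ)`. -/
structure XiF (Var Addr : Type) : Type where
  r : Set (ConfF Var Addr)
  σ : StoreF Var Addr
  σκ : KStoreF Var Addr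

def initConfF (e0 : Exp Var) : ConfF Var Addr := (e0, emptyEnv, ahalt)
def initStateF (e0 : Exp Var) : StateF Var Addr := ⟨e0, emptyEnv, botStore, botKStore, ahalt⟩
/-- The initial widened result `({(e₀, ∅, ã_halt)}, ⊥, ⊥)`. -/
def initXiF (e0 : Exp Var) : XiF Var Addr := ⟨{initConfF e0}, botStore, botKStore⟩

/-- The state obtained by pairing a configuration with the global stores. -/
def stateOfF (ξ : XiF Var Addr) (c : ConfF Var Addr) : StateF Var Addr :=
  ⟨c.1, c.2.1, ξ.σ, ξ.σκ, c.2.2⟩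

/-- The set `s̃` of all successors of the reachable configurations under the
    global stores, together with the injected initial state. -/
def succSetF (alloc : Var → StateF Var Addr → Addr) (e0 : Exp Var)
    (ξ : XiF Var Addr) : Set (StateF Var Addr) :=
  insert (initStateF e0) {ς' | ∃ c ∈ ξ.r, StepF alloc (stateOfF ξ c) ς'}

/-- The widened transfer relation `⤳̃Ξ`. -/
def XiStepF (alloc : Var → StateF Var Addr → Addr) (e0 : Exp Var)
    (ξ ξ' : XiF Var Addr) : Prop :=
  ξ'.r = {c | ∃ ς ∈ succSetF alloc e0 ξ, c = (ς.e, ς.ρ, ς.aκ)} ∧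
  ξ'.σ = (fun a => ⋃ ς ∈ succSetF alloc e0 ξ, ς.σ a) ∧
  ξ'.σκ = (fun aκ => ⋃ ς ∈ succSetF alloc e0 ξ, ς.σκ aκ)

/-- Implied stacks: `ψ̃ ∈ψ ãκ (via σ̃κ)`. -/
inductive Implied (σκ : KStoreF Var Addr) : KAddrF Var Addr → List (KontF Var Addr) → Prop where
  | halt : Implied σκ ahalt []
  | cons {φ : FrameF Var Addr} {aκ' aκ : KAddrF Var Addr} {ψ : List (KontF Var Addr)} :
      (φ, aκ') ∈ σκ aκ → Implied σκ aκ' ψ → aκ ≠ ahalt →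
      Implied σκ aκ ((φ, aκ') :: ψ)

/-- The finite-state sub-step relation `⤳⊑̃`. -/
def SubStepF (alloc : Var → StateF Var Addr → Addr) (ς ς' : StateF Var Addr) : Prop :=
  ∃ σ₁ σκ₁ σ₂ σκ₂,
    StepF alloc ⟨ς.e, ς.ρ, σ₁, σκ₁, ς.aκ⟩ ⟨ς'.e, ς'.ρ, σ₂, σκ₂, ς'.aκ⟩ ∧
    SubStore σ₁ ς.σ ∧ SubStore σκ₁ ς.σκ ∧ SubStore σ₂ ς'.σ ∧ SubStore σκ₂ ς'.σκ

/-- The finite-state sub-step relation `⤳⊑̃ (with ã, clo)`. -/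
def SubStepFWithClo (alloc : Var → StateF Var Addr → Addr) (ς ς' : StateF Var Addr)
    (a : Addr) (clo : CloF Var Addr) : Prop :=
  ∃ σ₁ σκ₁ σ₂ σκ₂,
    StepF alloc ⟨ς.e, ς.ρ, σ₁, σκ₁, ς.aκ⟩ ⟨ς'.e, ς'.ρ, σ₂, σκ₂, ς'.aκ⟩ ∧
    SubStore σ₁ ς.σ ∧ SubStore σκ₁ ς.σκ ∧ SubStore σ₂ ς'.σ ∧ SubStore σκ₂ ς'.σκ ∧
    clo ∈ σ₂ a

/-- The finite-state sub-step relation `⤳⊑̃ (with κ̃, ã''κ)`. -/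
def SubStepFWithKont (alloc : Var → StateF Var Addr → Addr) (ς ς' : StateF Var Addr)
    (aκ'' : KAddrF Var Addr) (κ : KontF Var Addr) : Prop :=
  ∃ σ₁ σκ₁ σ₂ σκ₂,
    StepF alloc ⟨ς.e, ς.ρ, σ₁, σκ₁, ς.aκ⟩ ⟨ς'.e, ς'.ρ, σ₂, σκ₂, ς'.aκ⟩ ∧
    SubStore σ₁ ς.σ ∧ SubStore σκ₁ ς.σκ ∧ SubStore σ₂ ς'.σ ∧ SubStore σκ₂ ς'.σκ ∧
    κ ∈ σκ₂ aκ''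

/-- Finite-state paths `(c̃, ψ̃) ↪̃ (c̃', ψ̃') (via ξ̃, ξ̃')`. -/
inductive PathF (alloc : Var → StateF Var Addr → Addr) (ξ ξ' : XiF Var Addr) :
    ConfF Var Addr × List (KontF Var Addr) →
    ConfF Var Addr × List (KontF Var Addr) → Prop where
  | refl {e : Exp Var} {ρ : EnvF Var Addr} {aκ : KAddrF Var Addr}
      {ψ : List (KontF Var Addr)} :
      (e, ρ, aκ) ∈ ξ'.r → Implied ξ'.σκ aκ ψ →
      PathF alloc ξ ξ' ((e, ρ, aκ), ψ) ((e, ρ, aκ), ψ)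
  | ret {c : ConfF Var Addr} {ψ₀ : List (KontF Var Addr)} {ae : AExp Var}
      {ρ'' ρκ : EnvF Var Addr} {aκ'' aκ' : KAddrF Var Addr} {x : Var} {e' : Exp Var}
      {ψ' : List (KontF Var Addr)} :
      PathF alloc ξ ξ' (c, ψ₀) ((Exp.ret ae, ρ'', aκ''), ((x, e', ρκ), aκ') :: ψ') →
      (Exp.ret ae, ρ'', aκ'') ∈ ξ.r →
      ((x, e', ρκ), aκ') ∈ ξ.σκ aκ'' →
      (e', upd ρκ x (alloc x ⟨Exp.ret ae, ρ'', ξ.σ, ξ.σκ, aκ''⟩), aκ') ∈ ξ'.r →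
      SubStepF alloc ⟨Exp.ret ae, ρ'', ξ.σ, ξ.σκ, aκ''⟩
        ⟨e', upd ρκ x (alloc x ⟨Exp.ret ae, ρ'', ξ.σ, ξ.σκ, aκ''⟩), ξ'.σ, ξ'.σκ, aκ'⟩ →
      PathF alloc ξ ξ' (c, ψ₀)
        ((e', upd ρκ x (alloc x ⟨Exp.ret ae, ρ'', ξ.σ, ξ.σκ, aκ''⟩), aκ'), ψ')
  | call {c : ConfF Var Addr} {ψ₀ : List (KontF Var Addr)} {x : Var}
      {f ae : AExp Var} {e'' e' : Exp Var} {ρ'' ρ' : EnvF Var Addr}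
      {aκ'' aκ' : KAddrF Var Addr} {ψ' : List (KontF Var Addr)} :
      PathF alloc ξ ξ' (c, ψ₀) ((Exp.letCall x f ae e'', ρ'', aκ''), ψ') →
      ((x, e'', ρ''), aκ'') ∈ ξ'.σκ aκ' →
      SubStepF alloc ⟨Exp.letCall x f ae e'', ρ'', ξ.σ, ξ.σκ, aκ''⟩
        ⟨e', ρ', ξ'.σ, ξ'.σκ, aκ'⟩ →
      PathF alloc ξ ξ' (c, ψ₀) ((e', ρ', aκ'), ((x, e'', ρ''), aκ'') :: ψ')

/-- `Entry` maps a continuation address to the entry-point configuration of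
    the function invocation whose configurations use that address. -/
def Entry (e0 : Exp Var) : KAddrF Var Addr → ConfF Var Addr
  | none => (e0, emptyEnv, ahalt)
  | some (eκ, ρκ) => (eκ, ρκ, some (eκ, ρκ))

/-- The non-recursive well-formedness sub-properties
    `wf_⊑ ∧ wf_init ∧ wf_halt ∧ wf_r̃ ∧ wf_σ̃ ∧ wf_σ̃κ`. -/
def WFRest (alloc : Var → StateF Var Addr → Addr) (e0 : Exp Var)
    (ξ ξ' : XiF Var Addr) : Prop :=
  (ξ.r ⊆ ξ'.r ∧ SubStore ξ.σ ξ'.σ ∧ SubStore ξ.σκ ξ'.σκ) ∧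
  (initConfF e0 ∈ ξ'.r) ∧
  (∀ κ : KontF Var Addr, κ ∉ ξ'.σκ ahalt) ∧
  (∀ c ∈ ξ'.r, ∃ ψ, Implied ξ'.σκ c.2.2 ψ ∧
      PathF alloc ξ ξ' (initConfF e0, []) (c, ψ)) ∧
  (∀ (a : Addr) (clo : CloF Var Addr), clo ∈ ξ'.σ a →
      ∃ c ∈ ξ.r, ∃ c' ∈ ξ'.r,
        SubStepFWithClo alloc (stateOfF ξ c) (stateOfF ξ' c') a clo) ∧
  (∀ (aκ' : KAddrF Var Addr) (x : Var) (e : Exp Var) (ρκ : EnvF Var Addr)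
      (aκ : KAddrF Var Addr), ((x, e, ρκ), aκ) ∈ ξ'.σκ aκ' →
      ∃ (eκ' : Exp Var) (ρκ' : EnvF Var Addr), aκ' = some (eκ', ρκ') ∧
        Entry e0 aκ' ∈ ξ'.r ∧
        ∃ (f ae : AExp Var), (Exp.letCall x f ae e, ρκ, aκ) ∈ ξ.r ∧
          SubStepFWithKont alloc ⟨Exp.letCall x f ae e, ρκ, ξ.σ, ξ.σκ, aκ⟩
            ⟨eκ', ρκ', ξ'.σ, ξ'.σκ, aκ'⟩ aκ' ((x, e, ρκ), aκ))

/-- Well-formedness `wf(ξ̃, ξ̃')`. -/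
inductive WF (alloc : Var → StateF Var Addr → Addr) (e0 : Exp Var) :
    XiF Var Addr → XiF Var Addr → Prop where
  | init :
      WFRest alloc e0 (initXiF e0) (initXiF e0) →
      WF alloc e0 (initXiF e0) (initXiF e0)
  | step {ξ'' ξ ξ' : XiF Var Addr} :
      WF alloc e0 ξ'' ξ → XiStepF alloc e0 ξ ξ' → WFRest alloc e0 ξ ξ' →
      WF alloc e0 ξ ξ'

/-! ### The unbounded-stack machine -/

/-- Unbounded-stack machine states `ς̂ = (e, ρ̂, σ̂, κ̂)`. -/
structure StateH (Var HAddr : Type) : Type where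
  e : Exp Var
  ρ : EnvF Var HAddr
  σ : StoreF Var HAddr
  κ : List (FrameF Var HAddr)

/-- The unbounded-stack transition relation `⤳̂Σ`. -/
inductive StepH (halloc : Var → StateH Var HAddr → HAddr) :
    StateH Var HAddr → StateH Var HAddr → Prop where
  | call {y x : Var} {f ae : AExp Var} {e e' : Exp Var} {ρ ρlam : EnvF Var HAddr}
      {σ : StoreF Var HAddr} {κ : List (FrameF Var HAddr)} :
      (Lam.mk x e', ρlam) ∈ aeval f ρ σ →
      StepH halloc ⟨Exp.letCall y f ae e, ρ, σ, κ⟩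
        ⟨e', upd ρlam x (halloc x ⟨Exp.letCall y f ae e, ρ, σ, κ⟩),
         joinOne σ (halloc x ⟨Exp.letCall y f ae e, ρ, σ, κ⟩) (aeval ae ρ σ),
         (y, e, ρ) :: κ⟩
  | ret {x : Var} {ae : AExp Var} {e : Exp Var} {ρ ρκ : EnvF Var HAddr}
      {σ : StoreF Var HAddr} {κ : List (FrameF Var HAddr)} :
      StepH halloc ⟨Exp.ret ae, ρ, σ, (x, e, ρκ) :: κ⟩
        ⟨e, upd ρκ x (halloc x ⟨Exp.ret ae, ρ, σ, (x, e, ρκ) :: κ⟩),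
         joinOne σ (halloc x ⟨Exp.ret ae, ρ, σ, (x, e, ρκ) :: κ⟩) (aeval ae ρ σ),
         κ⟩

/-- Unbounded-stack configurations `ĉ = (e, ρ̂, κ̂)`. -/
abbrev ConfH (Var HAddr : Type) : Type := Exp Var × EnvF Var HAddr × List (FrameF Var HAddr)

/-- Unbounded-stack widened state spaces `ξ̂ = (r̂, σ̂)`. -/
structure XiH (Var HAddr : Type) : Type where
  r : Set (ConfH Var HAddr)
  σ : StoreF Var HAddr

def initConfH (e0 : Exp Var) : ConfH Var HAddr := (e0, emptyEnv, [])
def initStateH (e0 : Exp Var) : StateH Var HAddr := ⟨e0, emptyEnv, botStore, []⟩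

def succSetH (halloc : Var → StateH Var HAddr → HAddr) (e0 : Exp Var)
    (ξ : XiH Var HAddr) : Set (StateH Var HAddr) :=
  insert (initStateH e0) {ς' | ∃ c ∈ ξ.r, StepH halloc ⟨c.1, c.2.1, ξ.σ, c.2.2⟩ ς'}

/-- The unbounded-stack widened transfer relation `⤳̂Ξ`. -/
def XiStepH (halloc : Var → StateH Var HAddr → HAddr) (e0 : Exp Var)
    (ξ ξ' : XiH Var HAddr) : Prop :=
  ξ'.r = {c | ∃ ς ∈ succSetH halloc e0 ξ, c = (ς.e, ς.ρ, ς.κ)} ∧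
  ξ'.σ = (fun a => ⋃ ς ∈ succSetH halloc e0 ξ, ς.σ a)

/-- The unbounded-stack sub-step relation `⤳⊑̂`. -/
def SubStepH (halloc : Var → StateH Var HAddr → HAddr) (ς ς' : StateH Var HAddr) : Prop :=
  ∃ σ₂, StepH halloc ⟨ς.e, ς.ρ, ς.σ, ς.κ⟩ ⟨ς'.e, ς'.ρ, σ₂, ς'.κ⟩ ∧ SubStore σ₂ ς'.σ

/-- Unbounded-stack paths `ĉ ↪̂ ĉ' (via r̂, σ̂)`. -/
inductive PathH (halloc : Var → StateH Var HAddr → HAddr)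
    (rH : Set (ConfH Var HAddr)) (σH : StoreF Var HAddr) :
    ConfH Var HAddr → ConfH Var HAddr → Prop where
  | refl (c : ConfH Var HAddr) : PathH halloc rH σH c c
  | step {c c' : ConfH Var HAddr} {e' : Exp Var} {ρ' : EnvF Var HAddr}
      {κ' : List (FrameF Var HAddr)} :
      PathH halloc rH σH c c' →
      SubStepH halloc ⟨c'.1, c'.2.1, σH, c'.2.2⟩ ⟨e', ρ', σH, κ'⟩ →
      PathH halloc rH σH c (e', ρ', κ')

/-! ### Conversions and precision relations (Assumption 1) -/

/-- `H_Env` induced by the address bijection. -/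
def HEnv (HA : Addr ≃ HAddr) (ρ : EnvF Var Addr) : EnvF Var HAddr :=
  fun x => (ρ x).map HA

/-- `H_Clo`. -/
def HClo (HA : Addr ≃ HAddr) (clo : CloF Var Addr) : CloF Var HAddr :=
  (clo.1, HEnv HA clo.2)

/-- `H_Frame`. -/
def HFrame (HA : Addr ≃ HAddr) (φ : FrameF Var Addr) : FrameF Var HAddr :=
  (φ.1, φ.2.1, HEnv HA φ.2.2)

/-- `H_Kont`: componentwise conversion of an implied stack into an unbounded stack. -/
def HKont (HA : Addr ≃ HAddr) (ψ : List (KontF Var Addr)) : List (FrameF Var HAddr) :=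
  ψ.map fun k => HFrame HA k.1

/-- `H_C`: conversion of a finite-state configuration with an implied stack
    into an unbounded-stack configuration. -/
def HC (HA : Addr ≃ HAddr) (c : ConfF Var Addr) (ψ : List (KontF Var Addr)) :
    ConfH Var HAddr :=
  (c.1, HEnv HA c.2.1, HKont HA ψ)

/-- Store precision `σ̂ ⊒Store σ̃`. -/
def StorePrec (HA : Addr ≃ HAddr) (σH : StoreF Var HAddr) (σ : StoreF Var Addr) : Prop :=
  ∀ (a : Addr) (clo : CloF Var Addr), clo ∈ σ a → HClo HA clo ∈ σH (HA a)

/-- Reachable-configurations precision `r̂ ⊒R r̃ (via σ̃κ)`. -/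
def RPrec (HA : Addr ≃ HAddr) (rH : Set (ConfH Var HAddr))
    (r : Set (ConfF Var Addr)) (σκ : KStoreF Var Addr) : Prop :=
  ∀ (e : Exp Var) (ρ : EnvF Var Addr) (aκ : KAddrF Var Addr)
    (ψ : List (KontF Var Addr)),
    (e, ρ, aκ) ∈ r → Implied σκ aκ ψ → (e, HEnv HA ρ, HKont HA ψ) ∈ rH

/-- State-space precision `ξ̂ ⊒Ξ ξ̃`. -/
def XiPrec (HA : Addr ≃ HAddr) (ξH : XiH Var HAddr) (ξ : XiF Var Addr) : Prop :=
  RPrec HA ξH.r ξ.r ξ.σκ ∧ StorePrec HA ξH.σ ξ.σ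

/-- Assumption 2 (allocation equivalence). -/
def AllocEquiv (HA : Addr ≃ HAddr) (alloc : Var → StateF Var Addr → Addr)
    (halloc : Var → StateH Var HAddr → HAddr) : Prop :=
  ∀ (x : Var) (e : Exp Var) (ρ : EnvF Var Addr) (σ : StoreF Var Addr)
    (σκ : KStoreF Var Addr) (aκ : KAddrF Var Addr) (σH : StoreF Var HAddr)
    (ψ : List (KontF Var Addr)),
    StorePrec HA σH σ → Implied σκ aκ ψ →
    halloc x ⟨e, HEnv HA ρ, σH, HKont HA ψ⟩ = HA (alloc x ⟨e, ρ, σ, σκ, aκ⟩)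

/-- Assumption 3 (allocation consistency). -/
def AllocConsistent (alloc : Var → StateF Var Addr → Addr) (e0 : Exp Var) : Prop :=
  ∀ (ξp ξ ξ' : XiF Var Addr) (e e' : Exp Var) (ρ ρ' : EnvF Var Addr)
    (aκ aκ' : KAddrF Var Addr) (σ'' : StoreF Var Addr) (σκ'' : KStoreF Var Addr)
    (x : Var),
    WF alloc e0 ξp ξ →
    StepF alloc ⟨e, ρ, ξ.σ, ξ.σκ, aκ⟩
      ⟨e', upd ρ' x (alloc x ⟨e, ρ, ξ.σ, ξ.σκ, aκ⟩), σ'', σκ'', aκ'⟩ →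
    XiStepF alloc e0 ξ ξ' →
    alloc x ⟨e, ρ, ξ.σ, ξ.σκ, aκ⟩ = alloc x ⟨e, ρ, ξ'.σ, ξ'.σκ, aκ⟩

end P4F

namespace P4F

section Aux
variable {Var Addr HAddr : Type}

theorem subStore_refl {A B : Type} (σ : A → Set B) : SubStore σ σ := fun _ => subset_rfl

theorem subStore_trans {A B : Type} {σ₁ σ₂ σ₃ : A → Set B} (h1 : SubStore σ₁ σ₂)
    (h2 : SubStore σ₂ σ₃) : SubStore σ₁ σ₃ := fun a => (h1 a).trans (h2 a)

theorem joinOne_le {A B : Type} (σ : A → Set B) (a : A) (d : Set B) :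
    SubStore σ (joinOne σ a d) := by
  intro a' b hb
  unfold joinOne
  split
  · exact Or.inl hb
  · exact hb

theorem mem_joinOne_self {A B : Type} {σ : A → Set B} {a : A} {d : Set B} {b : B}
    (hb : b ∈ d) : b ∈ joinOne σ a d a := by
  unfold joinOne
  rw [if_pos rfl]
  exact Or.inr hb

theorem mem_joinOne_elim {A B : Type} {σ : A → Set B} {a a' : A} {d : Set B} {b : B}
    (h : b ∈ joinOne σ a d a') : b ∈ σ a' ∨ (a' = a ∧ b ∈ d) := by
  unfold joinOne at h
  split at h
  · rcases h with h | h
    · exact Or.inl h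
    · exact Or.inr ⟨by assumption, h⟩
  · exact Or.inl h

theorem aeval_mono {ae : AExp Var} {ρ : EnvF Var Addr} {σ σ' : StoreF Var Addr}
    (h : SubStore σ σ') : aeval ae ρ σ ⊆ aeval ae ρ σ' := by
  cases ae with
  | var x =>
    intro clo hclo
    cases hx : ρ x with
    | none => simp only [aeval, hx] at hclo; exact hclo.elim
    | some a => simp only [aeval, hx] at hclo ⊢; exact h a hclo
  | lam l => exact subset_rfl

theorem implied_mono {σκ σκ' : KStoreF Var Addr} (h : SubStore σκ σκ') :
    ∀ {aκ ψ}, Implied σκ aκ ψ → Implied σκ' aκ ψ := by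
  intro aκ ψ hI
  induction hI with
  | halt => exact Implied.halt
  | cons hk _ hne ih => exact Implied.cons (h _ hk) ih hne

theorem implied_halt_nil {σκ : KStoreF Var Addr} {ψ : List (KontF Var Addr)}
    (h : Implied σκ ahalt ψ) : ψ = [] := by
  cases h with
  | halt => rfl
  | cons _ _ hne => exact absurd rfl hne

theorem hEnv_empty (HA : Addr ≃ HAddr) : HEnv HA (emptyEnv : EnvF Var Addr) = emptyEnv := rfl

theorem hEnv_upd (HA : Addr ≃ HAddr) (ρ : EnvF Var Addr) (x : Var) (a : Addr) :
    HEnv HA (upd ρ x a) = upd (HEnv HA ρ) x (HA a) := by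
  funext y
  by_cases h : y = x <;> simp [HEnv, upd, h]

theorem aeval_conv (HA : Addr ≃ HAddr) {ae : AExp Var} {ρ : EnvF Var Addr}
    {σ : StoreF Var Addr} {σH : StoreF Var HAddr} (hsp : StorePrec HA σH σ)
    {clo : CloF Var Addr} (h : clo ∈ aeval ae ρ σ) :
    (clo.1, HEnv HA clo.2) ∈ aeval ae (HEnv HA ρ) σH := by
  cases ae with
  | var x =>
    cases hx : ρ x with
    | none => simp only [aeval, hx] at h; exact h.elim
    | some a =>
      have hx' : HEnv HA ρ x = some (HA a) := by simp [HEnv, hx]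
      simp only [aeval, hx] at h
      simp only [aeval, hx']
      exact hsp a clo h
  | lam l =>
    simp only [aeval, Set.mem_singleton_iff] at h ⊢
    subst h
    rfl

theorem stepF_store_mono {alloc : Var → StateF Var Addr → Addr} {e ρ σ σκ aκ}
    {ς' : StateF Var Addr} (h : StepF alloc ⟨e, ρ, σ, σκ, aκ⟩ ς') :
    SubStore σ ς'.σ ∧ SubStore σκ ς'.σκ := by
  cases h with
  | call _ => exact ⟨joinOne_le _ _ _, joinOne_le _ _ _⟩
  | ret _ => exact ⟨joinOne_le _ _ _, subStore_refl _⟩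

theorem stepF_mono_exists {alloc : Var → StateF Var Addr → Addr} {e ρ σ₁ σκ₁ aκ}
    {σ σκ} {ς' : StateF Var Addr} (h : StepF alloc ⟨e, ρ, σ₁, σκ₁, aκ⟩ ς')
    (h1 : SubStore σ₁ σ) (h2 : SubStore σκ₁ σκ) :
    ∃ ς'', StepF alloc ⟨e, ρ, σ, σκ, aκ⟩ ς'' := by
  cases h with
  | call hclo => exact ⟨_, StepF.call (aeval_mono h1 hclo)⟩
  | ret hk => exact ⟨_, StepF.ret (h2 _ hk)⟩

theorem pathF_trans {alloc : Var → StateF Var Addr → Addr} {ξ ξ' : XiF Var Addr}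
    {p q r : ConfF Var Addr × List (KontF Var Addr)}
    (h1 : PathF alloc ξ ξ' p q) (h2 : PathF alloc ξ ξ' q r) : PathF alloc ξ ξ' p r := by
  obtain ⟨pc, pψ⟩ := p
  induction h2 with
  | refl _ _ => exact h1
  | ret _ hm hk hm' hs ih => exact PathF.ret (ih h1) hm hk hm' hs
  | call _ hk hs ih => exact PathF.call (ih h1) hk hs

end Aux

end P4F

namespace P4F

section Aux2
variable {Var Addr HAddr : Type}

theorem fix_init_mem {halloc : Var → StateH Var HAddr → HAddr} {e0 : Exp Var}
    {ξh : XiH Var HAddr} (hfix : XiStepH halloc e0 ξh ξh) :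
    (e0, emptyEnv, ([] : List (FrameF Var HAddr))) ∈ ξh.r := by
  rw [hfix.1]
  exact ⟨initStateH e0, Set.mem_insert _ _, rfl⟩

theorem fix_step_mem {halloc : Var → StateH Var HAddr → HAddr} {e0 : Exp Var}
    {ξh : XiH Var HAddr} (hfix : XiStepH halloc e0 ξh ξh)
    {ce : Exp Var} {cρ : EnvF Var HAddr} {cκ : List (FrameF Var HAddr)}
    {e' : Exp Var} {ρ' : EnvF Var HAddr} {σ' : StoreF Var HAddr}
    {κ' : List (FrameF Var HAddr)}
    (hc : (ce, cρ, cκ) ∈ ξh.r)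
    (hst : StepH halloc ⟨ce, cρ, ξh.σ, cκ⟩ ⟨e', ρ', σ', κ'⟩) :
    (e', ρ', κ') ∈ ξh.r ∧ SubStore σ' ξh.σ := by
  have hmem : (⟨e', ρ', σ', κ'⟩ : StateH Var HAddr) ∈ succSetH halloc e0 ξh :=
    Set.mem_insert_iff.mpr (Or.inr ⟨(ce, cρ, cκ), hc, hst⟩)
  constructor
  · rw [hfix.1]
    exact ⟨_, hmem, rfl⟩
  · intro a b hb
    rw [hfix.2]
    simp only [Set.mem_iUnion]
    exact ⟨_, hmem, hb⟩

/-- Intra-invocation reachability from the entry of an invocation, with all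
machine steps recorded at the current global stores of `ξ`. -/
inductive Reach (alloc : Var → StateF Var Addr → Addr) (e0 : Exp Var) (ξ : XiF Var Addr) :
    KAddrF Var Addr → Exp Var → EnvF Var Addr → Prop where
  | haltEntry :
      (e0, emptyEnv, (none : KAddrF Var Addr)) ∈ ξ.r →
      Reach alloc e0 ξ none e0 emptyEnv
  | entry {eκ : Exp Var} {ρκ : EnvF Var Addr} :
      (eκ, ρκ, (some (eκ, ρκ) : KAddrF Var Addr)) ∈ ξ.r →
      Reach alloc e0 ξ (some (eκ, ρκ)) eκ ρκ
  | step {aκ : KAddrF Var Addr} {y x : Var} {f ae ae₂ : AExp Var} {e₁ eb : Exp Var}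
      {ρ₁ ρlam ρ₃ : EnvF Var Addr} :
      Reach alloc e0 ξ aκ (Exp.letCall y f ae e₁) ρ₁ →
      (Lam.mk x eb, ρlam) ∈ aeval f ρ₁ ξ.σ →
      ((y, e₁, ρ₁), aκ) ∈ ξ.σκ (some (eb, upd ρlam x (alloc x ⟨Exp.letCall y f ae e₁, ρ₁, ξ.σ, ξ.σκ, aκ⟩))) →
      Reach alloc e0 ξ (some (eb, upd ρlam x (alloc x ⟨Exp.letCall y f ae e₁, ρ₁, ξ.σ, ξ.σκ, aκ⟩))) (Exp.ret ae₂) ρ₃ →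
      (e₁, upd ρ₁ y (alloc y ⟨Exp.ret ae₂, ρ₃, ξ.σ, ξ.σκ, some (eb, upd ρlam x (alloc x ⟨Exp.letCall y f ae e₁, ρ₁, ξ.σ, ξ.σκ, aκ⟩))⟩), aκ) ∈ ξ.r →
      Reach alloc e0 ξ aκ e₁ (upd ρ₁ y (alloc y ⟨Exp.ret ae₂, ρ₃, ξ.σ, ξ.σκ, some (eb, upd ρlam x (alloc x ⟨Exp.letCall y f ae e₁, ρ₁, ξ.σ, ξ.σκ, aκ⟩))⟩))

theorem Reach.mem {alloc : Var → StateF Var Addr → Addr} {e0 : Exp Var} {ξ : XiF Var Addr}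
    {aκ : KAddrF Var Addr} {e : Exp Var} {ρ : EnvF Var Addr}
    (h : Reach alloc e0 ξ aκ e ρ) : (e, ρ, aκ) ∈ ξ.r := by
  cases h with
  | haltEntry h => exact h
  | entry h => exact h
  | step _ _ _ _ h => exact h

/-- The invariant carried along the finite-state widened iteration. -/
structure Good (alloc : Var → StateF Var Addr → Addr) (e0 : Exp Var) (HA : Addr ≃ HAddr)
    (ξh : XiH Var HAddr) (ξ : XiF Var Addr) : Prop where
  wf : ∃ ξp, WF alloc e0 ξp ξ
  init_mem : initConfF e0 ∈ ξ.r
  halt_empty : ∀ k : KontF Var Addr, k ∉ ξ.σκ (none : KAddrF Var Addr)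
  entryK : ∀ (e : Exp Var) (ρ : EnvF Var Addr) (p : Exp Var × EnvF Var Addr),
    (e, ρ, (some p : KAddrF Var Addr)) ∈ ξ.r → ∃ k, k ∈ ξ.σκ (some p : KAddrF Var Addr)
  gstack : ∀ (e : Exp Var) (ρ : EnvF Var Addr) (aκ : KAddrF Var Addr),
    (e, ρ, aκ) ∈ ξ.r → ∃ ψ, Implied ξ.σκ aκ ψ
  reach : ∀ (e : Exp Var) (ρ : EnvF Var Addr) (aκ : KAddrF Var Addr),
    (e, ρ, aκ) ∈ ξ.r → Reach alloc e0 ξ aκ e ρ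
  kontw : ∀ (aκ : KAddrF Var Addr) (y : Var) (e₁ : Exp Var) (ρ₁ : EnvF Var Addr)
    (aκ₂ : KAddrF Var Addr), ((y, e₁, ρ₁), aκ₂) ∈ ξ.σκ aκ →
    ∃ (f ae : AExp Var) (x : Var) (eκ : Exp Var) (ρlam : EnvF Var Addr),
      (Lam.mk x eκ, ρlam) ∈ aeval f ρ₁ ξ.σ ∧
      aκ = some (eκ, upd ρlam x (alloc x ⟨Exp.letCall y f ae e₁, ρ₁, ξ.σ, ξ.σκ, aκ₂⟩)) ∧
      (Exp.letCall y f ae e₁, ρ₁, aκ₂) ∈ ξ.r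
  clow : ∀ (a : Addr) (clo : CloF Var Addr), clo ∈ ξ.σ a →
    ∃ c ∈ ξ.r, ∃ c' ∈ ξ.r, SubStepFWithClo alloc (stateOfF ξ c) (stateOfF ξ c') a clo
  sprec : StorePrec HA ξh.σ ξ.σ

/-- H-side absorption of intra-invocation reachability: if the converted entry
of the invocation (with converted stack) is in `ξ̂`'s reachable set, so is the
converted configuration. -/
theorem reach_absorb {alloc : Var → StateF Var Addr → Addr}
    {halloc : Var → StateH Var HAddr → HAddr} {e0 : Exp Var} {HA : Addr ≃ HAddr}
    {ξh : XiH Var HAddr} {ξ : XiF Var Addr}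
    (hAE : AllocEquiv HA alloc halloc) (hfix : XiStepH halloc e0 ξh ξh)
    (hsp : StorePrec HA ξh.σ ξ.σ) :
    ∀ {aκ : KAddrF Var Addr} {e : Exp Var} {ρ : EnvF Var Addr},
      Reach alloc e0 ξ aκ e ρ → ∀ ψ, Implied ξ.σκ aκ ψ →
      ((Entry e0 aκ : ConfF Var Addr).1, HEnv HA (Entry e0 aκ).2.1, HKont HA ψ) ∈ ξh.r →
      (e, HEnv HA ρ, HKont HA ψ) ∈ ξh.r := by
  intro aκ e ρ hR
  induction hR with
  | haltEntry h => intro ψ hψ hent; exact hent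
  | entry h => intro ψ hψ hent; exact hent
  | step hcall hclo hkont hret hmem ih₁ ih₂ =>
    rename_i aκ y x f ae ae₂ e₁ eb ρ₁ ρlam ρ₃
    intro ψ hψ hent
    have hcallerH := ih₁ ψ hψ hent
    have hcs := StepH.call (halloc := halloc) (y := y) (ae := ae) (e := e₁)
      (κ := HKont HA ψ) (aeval_conv HA hsp hclo)
    have h2 := (fix_step_mem hfix hcallerH hcs).1
    have hAe1 : halloc x ⟨Exp.letCall y f ae e₁, HEnv HA ρ₁, ξh.σ, HKont HA ψ⟩
        = HA (alloc x ⟨Exp.letCall y f ae e₁, ρ₁, ξ.σ, ξ.σκ, aκ⟩) :=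
      hAE x _ _ _ _ _ _ _ hsp hψ
    rw [hAe1, ← hEnv_upd] at h2
    have hψ2 : Implied ξ.σκ
        (some (eb, upd ρlam x (alloc x ⟨Exp.letCall y f ae e₁, ρ₁, ξ.σ, ξ.σκ, aκ⟩)))
        (((y, e₁, ρ₁), aκ) :: ψ) :=
      Implied.cons hkont hψ (by simp [ahalt])
    have hentry2 : ((Entry e0 (some (eb, upd ρlam x (alloc x ⟨Exp.letCall y f ae e₁, ρ₁, ξ.σ, ξ.σκ, aκ⟩))) : ConfF Var Addr).1,
        HEnv HA (Entry e0 (some (eb, upd ρlam x (alloc x ⟨Exp.letCall y f ae e₁, ρ₁, ξ.σ, ξ.σκ, aκ⟩)))).2.1,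
        HKont HA (((y, e₁, ρ₁), aκ) :: ψ)) ∈ ξh.r := h2
    have h3 := ih₂ (((y, e₁, ρ₁), aκ) :: ψ) hψ2 hentry2
    have h3' : (Exp.ret ae₂, HEnv HA ρ₃, (y, e₁, HEnv HA ρ₁) :: HKont HA ψ) ∈ ξh.r := h3
    have h4 := (fix_step_mem hfix h3' (StepH.ret (halloc := halloc))).1
    have hAe2 : halloc y ⟨Exp.ret ae₂, HEnv HA ρ₃, ξh.σ, (y, e₁, HEnv HA ρ₁) :: HKont HA ψ⟩
        = HA (alloc y ⟨Exp.ret ae₂, ρ₃, ξ.σ, ξ.σκ,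
            some (eb, upd ρlam x (alloc x ⟨Exp.letCall y f ae e₁, ρ₁, ξ.σ, ξ.σκ, aκ⟩))⟩) :=
      hAE y _ _ _ _ _ _ (((y, e₁, ρ₁), aκ) :: ψ) hsp hψ2
    rw [hAe2, ← hEnv_upd] at h4
    exact h4

/-- Converted entry configurations (with converted implied stacks) are in `ξ̂`. -/
theorem entry_absorb {alloc : Var → StateF Var Addr → Addr}
    {halloc : Var → StateH Var HAddr → HAddr} {e0 : Exp Var} {HA : Addr ≃ HAddr}
    {ξh : XiH Var HAddr} {ξ : XiF Var Addr}
    (hAE : AllocEquiv HA alloc halloc) (hfix : XiStepH halloc e0 ξh ξh)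
    (hG : Good alloc e0 HA ξh ξ) :
    ∀ {aκ : KAddrF Var Addr} {ψ : List (KontF Var Addr)}, Implied ξ.σκ aκ ψ →
      ((Entry e0 aκ : ConfF Var Addr).1, HEnv HA (Entry e0 aκ).2.1, HKont HA ψ) ∈ ξh.r := by
  intro aκ ψ hψ
  induction hψ with
  | halt => exact fix_init_mem hfix
  | cons hk htail hne ih =>
    rename_i φ aκ₂ aκ ψ₂
    obtain ⟨y, e₁, ρ₁⟩ := φ
    obtain ⟨f, ae, x, eκ, ρlam, hclo, haeq, hcaller⟩ := hG.kontw _ _ _ _ _ hk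
    subst haeq
    have hcallerH : (Exp.letCall y f ae e₁, HEnv HA ρ₁, HKont HA ψ₂) ∈ ξh.r :=
      reach_absorb hAE hfix hG.sprec (hG.reach _ _ _ hcaller) ψ₂ htail ih
    have hcs := StepH.call (halloc := halloc) (y := y) (ae := ae) (e := e₁)
      (κ := HKont HA ψ₂) (aeval_conv HA hG.sprec hclo)
    have h2 := (fix_step_mem hfix hcallerH hcs).1
    have hAe1 : halloc x ⟨Exp.letCall y f ae e₁, HEnv HA ρ₁, ξh.σ, HKont HA ψ₂⟩
        = HA (alloc x ⟨Exp.letCall y f ae e₁, ρ₁, ξ.σ, ξ.σκ, aκ₂⟩) :=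
      hAE x _ _ _ _ _ _ _ hG.sprec htail
    rw [hAe1, ← hEnv_upd] at h2
    exact h2

theorem rprec_of_good {alloc : Var → StateF Var Addr → Addr}
    {halloc : Var → StateH Var HAddr → HAddr} {e0 : Exp Var} {HA : Addr ≃ HAddr}
    {ξh : XiH Var HAddr} {ξ : XiF Var Addr}
    (hAE : AllocEquiv HA alloc halloc) (hfix : XiStepH halloc e0 ξh ξh)
    (hG : Good alloc e0 HA ξh ξ) : RPrec HA ξh.r ξ.r ξ.σκ := by
  intro e ρ aκ ψ hmem hψ
  exact reach_absorb hAE hfix hG.sprec (hG.reach _ _ _ hmem) ψ hψ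
    (entry_absorb hAE hfix hG hψ)

theorem kont_ne_halt {σκ : KStoreF Var Addr} {k : KontF Var Addr} {aκ : KAddrF Var Addr}
    (hempty : ∀ k' : KontF Var Addr, k' ∉ σκ (none : KAddrF Var Addr))
    (hk : k ∈ σκ aκ) : aκ ≠ ahalt := by intro h; subst h; exact hempty k hk

end Aux2

end P4F

namespace P4F

section Aux3
variable {Var Addr HAddr : Type}

theorem wfrest_init {alloc : Var → StateF Var Addr → Addr} {e0 : Exp Var} :
    WFRest alloc e0 (initXiF e0) (initXiF e0) := by
  refine ⟨⟨subset_rfl, subStore_refl _, subStore_refl _⟩, rfl, ?_, ?_, ?_, ?_⟩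
  · intro k hk
    exact hk.elim
  · intro c hc
    have hc' : c = initConfF e0 := hc
    subst hc'
    exact ⟨[], Implied.halt, PathF.refl rfl Implied.halt⟩
  · intro a clo hclo
    exact hclo.elim
  · intro aκ' x e ρκ aκ hk
    exact hk.elim

theorem good_init {alloc : Var → StateF Var Addr → Addr} {e0 : Exp Var}
    {HA : Addr ≃ HAddr} {ξh : XiH Var HAddr} :
    Good alloc e0 HA ξh (initXiF e0) := by
  refine ⟨⟨initXiF e0, WF.init wfrest_init⟩, rfl, ?_, ?_, ?_, ?_, ?_, ?_, ?_⟩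
  · intro k hk
    exact hk.elim
  · intro e ρ p h
    have h' : (e, ρ, (some p : KAddrF Var Addr)) = initConfF e0 := h
    simp only [initConfF, Prod.mk.injEq] at h'
    exact absurd h'.2.2 (by simp [ahalt])
  · intro e ρ aκ h
    have h' : (e, ρ, aκ) = initConfF e0 := h
    simp only [initConfF, Prod.mk.injEq] at h'
    obtain ⟨rfl, rfl, rfl⟩ := h'
    exact ⟨[], Implied.halt⟩
  · intro e ρ aκ h
    have h' : (e, ρ, aκ) = initConfF e0 := h
    simp only [initConfF, Prod.mk.injEq] at h'
    obtain ⟨rfl, rfl, rfl⟩ := h'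
    exact Reach.haltEntry rfl
  · intro aκ y e₁ ρ₁ aκ₂ hk
    exact hk.elim
  · intro a clo hclo
    exact hclo.elim
  · intro a clo hclo
    exact hclo.elim

end Aux3

end P4F

namespace P4F

section Aux4
variable {Var Addr HAddr : Type}

theorem good_step {alloc : Var → StateF Var Addr → Addr}
    {halloc : Var → StateH Var HAddr → HAddr} {e0 : Exp Var} {HA : Addr ≃ HAddr}
    {ξh : XiH Var HAddr} {ξ ξ' : XiF Var Addr}
    (hAE : AllocEquiv HA alloc halloc) (hAC : AllocConsistent alloc e0)
    (hfix : XiStepH halloc e0 ξh ξh)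
    (hG : Good alloc e0 HA ξh ξ) (hXi : XiStepF alloc e0 ξ ξ') :
    Good alloc e0 HA ξh ξ' := by
  obtain ⟨ξp, hWF⟩ := hG.wf
  have hr' := hXi.1
  have hσ' := hXi.2.1
  have hσκ' := hXi.2.2
  -- successors are recorded in ξ'
  have hsuccR : ∀ {e : Exp Var} {ρ : EnvF Var Addr} {aκ : KAddrF Var Addr}
      (ς' : StateF Var Addr), (e, ρ, aκ) ∈ ξ.r →
      StepF alloc ⟨e, ρ, ξ.σ, ξ.σκ, aκ⟩ ς' → (ς'.e, ς'.ρ, ς'.aκ) ∈ ξ'.r := by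
    intro e ρ aκ ς' hc hst
    rw [hr']
    exact ⟨ς', Set.mem_insert_iff.mpr (Or.inr ⟨(e, ρ, aκ), hc, hst⟩), rfl⟩
  have hsuccσ : ∀ {e : Exp Var} {ρ : EnvF Var Addr} {aκ : KAddrF Var Addr}
      (ς' : StateF Var Addr), (e, ρ, aκ) ∈ ξ.r →
      StepF alloc ⟨e, ρ, ξ.σ, ξ.σκ, aκ⟩ ς' → SubStore ς'.σ ξ'.σ := by
    intro e ρ aκ ς' hc hst a b hb
    rw [hσ']
    simp only [Set.mem_iUnion]
    exact ⟨ς', Set.mem_insert_iff.mpr (Or.inr ⟨(e, ρ, aκ), hc, hst⟩), hb⟩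
  have hsuccσκ : ∀ {e : Exp Var} {ρ : EnvF Var Addr} {aκ : KAddrF Var Addr}
      (ς' : StateF Var Addr), (e, ρ, aκ) ∈ ξ.r →
      StepF alloc ⟨e, ρ, ξ.σ, ξ.σκ, aκ⟩ ς' → SubStore ς'.σκ ξ'.σκ := by
    intro e ρ aκ ς' hc hst a b hb
    rw [hσκ']
    simp only [Set.mem_iUnion]
    exact ⟨ς', Set.mem_insert_iff.mpr (Or.inr ⟨(e, ρ, aκ), hc, hst⟩), hb⟩
  have hinit' : initConfF e0 ∈ ξ'.r := by
    rw [hr']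
    exact ⟨initStateF e0, Set.mem_insert _ _, rfl⟩
  -- inversion of ξ'.r membership
  have hsucc_cases : ∀ {c' : ConfF Var Addr}, c' ∈ ξ'.r → c' = initConfF e0 ∨
      (∃ (y : Var) (f ae : AExp Var) (e : Exp Var) (ρ : EnvF Var Addr)
         (aκ : KAddrF Var Addr) (x : Var) (eb : Exp Var) (ρlam : EnvF Var Addr),
        (Exp.letCall y f ae e, ρ, aκ) ∈ ξ.r ∧ (Lam.mk x eb, ρlam) ∈ aeval f ρ ξ.σ ∧
        c' = (eb, upd ρlam x (alloc x ⟨Exp.letCall y f ae e, ρ, ξ.σ, ξ.σκ, aκ⟩),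
              some (eb, upd ρlam x (alloc x ⟨Exp.letCall y f ae e, ρ, ξ.σ, ξ.σκ, aκ⟩)))) ∨
      (∃ (ae : AExp Var) (ρ : EnvF Var Addr) (aκ : KAddrF Var Addr) (x : Var)
         (e : Exp Var) (ρκ : EnvF Var Addr) (aκ' : KAddrF Var Addr),
        (Exp.ret ae, ρ, aκ) ∈ ξ.r ∧ ((x, e, ρκ), aκ') ∈ ξ.σκ aκ ∧
        c' = (e, upd ρκ x (alloc x ⟨Exp.ret ae, ρ, ξ.σ, ξ.σκ, aκ⟩), aκ')) := by
    intro c' hc'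
    rw [hr'] at hc'
    obtain ⟨ς, hς, rfl⟩ := hc'
    rcases Set.mem_insert_iff.mp hς with h | ⟨c, hc, hst⟩
    · subst h; left; rfl
    · obtain ⟨ce, cρ, caκ⟩ := c
      cases hst with
      | call hclo =>
        right; left
        exact ⟨_, _, _, _, _, _, _, _, _, hc, hclo, rfl⟩
      | ret hk =>
        right; right
        exact ⟨_, _, _, _, _, _, _, hc, hk, rfl⟩
  -- inversion of ξ'.σκ membership
  have hσκ_cases : ∀ {aκs : KAddrF Var Addr} {k : KontF Var Addr}, k ∈ ξ'.σκ aκs →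
      k ∈ ξ.σκ aκs ∨
      (∃ (y : Var) (f ae : AExp Var) (e : Exp Var) (ρ : EnvF Var Addr)
         (aκ : KAddrF Var Addr) (x : Var) (eb : Exp Var) (ρlam : EnvF Var Addr),
        (Exp.letCall y f ae e, ρ, aκ) ∈ ξ.r ∧ (Lam.mk x eb, ρlam) ∈ aeval f ρ ξ.σ ∧
        aκs = some (eb, upd ρlam x (alloc x ⟨Exp.letCall y f ae e, ρ, ξ.σ, ξ.σκ, aκ⟩)) ∧
        k = ((y, e, ρ), aκ)) := by
    intro aκs k hk
    rw [hσκ'] at hk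
    simp only [Set.mem_iUnion] at hk
    obtain ⟨ς, hς, hmem⟩ := hk
    rcases Set.mem_insert_iff.mp hς with h | ⟨c, hc, hst⟩
    · subst h; exact hmem.elim
    · obtain ⟨ce, cρ, caκ⟩ := c
      cases hst with
      | call hclo =>
        rcases mem_joinOne_elim hmem with h | ⟨rfl, hk2⟩
        · exact Or.inl h
        · right
          exact ⟨_, _, _, _, _, _, _, _, _, hc, hclo, rfl, hk2⟩
      | ret hk3 => exact Or.inl hmem
  -- inversion of ξ'.σ membership
  have hσ_cases : ∀ {a : Addr} {clo : CloF Var Addr}, clo ∈ ξ'.σ a → clo ∈ ξ.σ a ∨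
      (∃ (y : Var) (f ae : AExp Var) (e : Exp Var) (ρ : EnvF Var Addr)
         (aκ : KAddrF Var Addr) (x : Var) (eb : Exp Var) (ρlam : EnvF Var Addr),
        (Exp.letCall y f ae e, ρ, aκ) ∈ ξ.r ∧ (Lam.mk x eb, ρlam) ∈ aeval f ρ ξ.σ ∧
        a = alloc x ⟨Exp.letCall y f ae e, ρ, ξ.σ, ξ.σκ, aκ⟩ ∧ clo ∈ aeval ae ρ ξ.σ) ∨
      (∃ (ae : AExp Var) (ρ : EnvF Var Addr) (aκ : KAddrF Var Addr) (x : Var)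
         (e : Exp Var) (ρκ : EnvF Var Addr) (aκ' : KAddrF Var Addr),
        (Exp.ret ae, ρ, aκ) ∈ ξ.r ∧ ((x, e, ρκ), aκ') ∈ ξ.σκ aκ ∧
        a = alloc x ⟨Exp.ret ae, ρ, ξ.σ, ξ.σκ, aκ⟩ ∧ clo ∈ aeval ae ρ ξ.σ) := by
    intro a clo hclo
    rw [hσ'] at hclo
    simp only [Set.mem_iUnion] at hclo
    obtain ⟨ς, hς, hmem⟩ := hclo
    rcases Set.mem_insert_iff.mp hς with h | ⟨c, hc, hst⟩
    · subst h; exact hmem.elim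
    · obtain ⟨ce, cρ, caκ⟩ := c
      cases hst with
      | call hclo2 =>
        rcases mem_joinOne_elim hmem with h | ⟨rfl, hmem2⟩
        · exact Or.inl h
        · right; left
          exact ⟨_, _, _, _, _, _, _, _, _, hc, hclo2, rfl, hmem2⟩
      | ret hk3 =>
        rcases mem_joinOne_elim hmem with h | ⟨rfl, hmem2⟩
        · exact Or.inl h
        · right; right
          exact ⟨_, _, _, _, _, _, _, hc, hk3, rfl, hmem2⟩
  -- allocation consistency across the round
  have hACcall : ∀ {y : Var} {f ae : AExp Var} {e₁ : Exp Var} {ρ₁ : EnvF Var Addr}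
      {aκ : KAddrF Var Addr} {x : Var} {eb : Exp Var} {ρlam : EnvF Var Addr},
      (Lam.mk x eb, ρlam) ∈ aeval f ρ₁ ξ.σ →
      alloc x ⟨Exp.letCall y f ae e₁, ρ₁, ξ.σ, ξ.σκ, aκ⟩
        = alloc x ⟨Exp.letCall y f ae e₁, ρ₁, ξ'.σ, ξ'.σκ, aκ⟩ := by
    intro y f ae e₁ ρ₁ aκ x eb ρlam hclo
    exact hAC ξp ξ ξ' _ _ _ _ _ _ _ _ _ hWF (StepF.call hclo) hXi
  have hACret : ∀ {ae : AExp Var} {ρ : EnvF Var Addr} {aκ : KAddrF Var Addr} {x : Var}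
      {e : Exp Var} {ρκ : EnvF Var Addr} {aκ' : KAddrF Var Addr},
      ((x, e, ρκ), aκ') ∈ ξ.σκ aκ →
      alloc x ⟨Exp.ret ae, ρ, ξ.σ, ξ.σκ, aκ⟩ = alloc x ⟨Exp.ret ae, ρ, ξ'.σ, ξ'.σκ, aκ⟩ := by
    intro ae ρ aκ x e ρκ aκ' hk
    exact hAC ξp ξ ξ' _ _ _ _ _ _ _ _ _ hWF (StepF.ret hk) hXi
  -- store monotonicity
  have hσmono : SubStore ξ.σ ξ'.σ := by
    by_cases hs : ∃ c ∈ ξ.r, ∃ ς', StepF alloc (stateOfF ξ c) ς'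
    · obtain ⟨⟨ce, cρ, caκ⟩, hc, ς', hst⟩ := hs
      have hst' : StepF alloc ⟨ce, cρ, ξ.σ, ξ.σκ, caκ⟩ ς' := hst
      exact subStore_trans (stepF_store_mono hst').1 (hsuccσ ς' hc hst')
    · intro a clo hclo
      exfalso
      apply hs
      obtain ⟨c, hc, c', hc', σ₁, σκ₁, σ₂, σκ₂, hstep, hs1, hk1, _, _, _⟩ :=
        hG.clow a clo hclo
      obtain ⟨ce, cρ, caκ⟩ := c
      obtain ⟨ς'', hς''⟩ := stepF_mono_exists hstep hs1 hk1
      exact ⟨(ce, cρ, caκ), hc, ς'', hς''⟩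
  have hσκmono : SubStore ξ.σκ ξ'.σκ := by
    by_cases hs : ∃ c ∈ ξ.r, ∃ ς', StepF alloc (stateOfF ξ c) ς'
    · obtain ⟨⟨ce, cρ, caκ⟩, hc, ς', hst⟩ := hs
      have hst' : StepF alloc ⟨ce, cρ, ξ.σ, ξ.σκ, caκ⟩ ς' := hst
      exact subStore_trans (stepF_store_mono hst').2 (hsuccσκ ς' hc hst')
    · intro aκ k hk
      exfalso
      apply hs
      obtain ⟨⟨y, e₁, ρ₁⟩, aκ₂⟩ := k
      obtain ⟨f, ae, x, eκ, ρlam, hclo, _, hcaller⟩ := hG.kontw _ _ _ _ _ hk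
      exact ⟨(Exp.letCall y f ae e₁, ρ₁, aκ₂), hcaller, _, StepF.call hclo⟩
  have himono : ∀ {aκ : KAddrF Var Addr} {ψ}, Implied ξ.σκ aκ ψ → Implied ξ'.σκ aκ ψ :=
    fun h => implied_mono hσκmono h
  -- reachable-set monotonicity
  have hrmono : ξ.r ⊆ ξ'.r := by
    intro c hc
    obtain ⟨ce, cρ, caκ⟩ := c
    cases hG.reach _ _ _ hc with
    | haltEntry h => exact hinit'
    | entry h =>
      obtain ⟨k, hk⟩ := hG.entryK _ _ _ h
      obtain ⟨⟨y, e₁, ρ₁⟩, aκ₂⟩ := k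
      obtain ⟨f, ae, x, eκ', ρlam, hclo, haeq, hcaller⟩ := hG.kontw _ _ _ _ _ hk
      have h1 : ce = eκ' ∧ cρ = upd ρlam x (alloc x ⟨Exp.letCall y f ae e₁, ρ₁, ξ.σ, ξ.σκ, aκ₂⟩) := by
        have := haeq
        simp only [Option.some.injEq, Prod.mk.injEq] at this
        exact this
      obtain ⟨rfl, rfl⟩ := h1
      exact hsuccR _ hcaller (StepF.call hclo)
    | step hcall hclo hkont hret hmem =>
      exact hsuccR _ (Reach.mem hret) (StepF.ret hkont)
  -- unified provenance of continuations in ξ'.σκ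
  have hkont_data : ∀ {aκs : KAddrF Var Addr} {y : Var} {e₁ : Exp Var} {ρ₁ : EnvF Var Addr}
      {aκ₂ : KAddrF Var Addr}, ((y, e₁, ρ₁), aκ₂) ∈ ξ'.σκ aκs →
      ∃ (f ae : AExp Var) (x : Var) (eκ : Exp Var) (ρlam : EnvF Var Addr),
        (Lam.mk x eκ, ρlam) ∈ aeval f ρ₁ ξ.σ ∧
        aκs = some (eκ, upd ρlam x (alloc x ⟨Exp.letCall y f ae e₁, ρ₁, ξ.σ, ξ.σκ, aκ₂⟩)) ∧
        (Exp.letCall y f ae e₁, ρ₁, aκ₂) ∈ ξ.r := by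
    intro aκs y e₁ ρ₁ aκ₂ hk
    rcases hσκ_cases hk with h | ⟨y', f, ae, e, ρ, aκ, x, eb, ρlam, hcaller, hclo, haeq, hkeq⟩
    · exact hG.kontw _ _ _ _ _ h
    · simp only [Prod.mk.injEq] at hkeq
      obtain ⟨⟨rfl, rfl, rfl⟩, rfl⟩ := hkeq
      exact ⟨f, ae, x, eb, ρlam, hclo, haeq, hcaller⟩
  -- lifting Reach across the round
  have hreachlift : ∀ {aκ : KAddrF Var Addr} {e : Exp Var} {ρ : EnvF Var Addr},
      Reach alloc e0 ξ aκ e ρ → Reach alloc e0 ξ' aκ e ρ := by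
    intro aκ e ρ hR
    induction hR with
    | haltEntry h => exact Reach.haltEntry (hrmono h)
    | entry h => exact Reach.entry (hrmono h)
    | step hcall hclo hkont hret hmem ih₁ ih₂ =>
      rename_i aκ y x f ae ae₂ e₁ eb ρ₁ ρlam ρ₃
      have hc1 := hACcall (y := y) (ae := ae) (e₁ := e₁) (aκ := aκ) hclo
      have hk' : ((y, e₁, ρ₁), aκ) ∈ ξ'.σκ
          (some (eb, upd ρlam x (alloc x ⟨Exp.letCall y f ae e₁, ρ₁, ξ'.σ, ξ'.σκ, aκ⟩))) := by
        rw [← hc1]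
        exact hσκmono _ hkont
      have hret2 := hACret (ae := ae₂) (ρ := ρ₃) hkont
      rw [hc1] at ih₂
      have hm' : (e₁, upd ρ₁ y (alloc y ⟨Exp.ret ae₂, ρ₃, ξ'.σ, ξ'.σκ,
          some (eb, upd ρlam x (alloc x ⟨Exp.letCall y f ae e₁, ρ₁, ξ'.σ, ξ'.σκ, aκ⟩))⟩), aκ)
          ∈ ξ'.r := by
        rw [← hc1, ← hret2]
        exact hrmono hmem
      have hfinal := Reach.step ih₁ (aeval_mono hσmono hclo) hk' ih₂ hm'
      rw [hret2, hc1]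
      exact hfinal
  -- Reach for the new result
  have hreach' : ∀ (e : Exp Var) (ρ : EnvF Var Addr) (aκ : KAddrF Var Addr),
      (e, ρ, aκ) ∈ ξ'.r → Reach alloc e0 ξ' aκ e ρ := by
    intro e ρ aκ hc
    rcases hsucc_cases hc with h | ⟨y, f, ae, e₁, ρ₁, aκ₂, x, eb, ρlam, hcaller, hclo, heq⟩ |
      ⟨ae, ρ₀, aκ₀, x, e₁, ρκ, aκ', hret, hk, heq⟩
    · simp only [initConfF, Prod.mk.injEq] at h
      obtain ⟨rfl, rfl, rfl⟩ := h
      exact Reach.haltEntry hinit'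
    · simp only [Prod.mk.injEq] at heq
      obtain ⟨rfl, rfl, rfl⟩ := heq
      exact Reach.entry hc
    · simp only [Prod.mk.injEq] at heq
      obtain ⟨rfl, rfl, rfl⟩ := heq
      obtain ⟨f2, ae2, x2, eκ2, ρlam2, hclo2, haeq, hcaller2⟩ := hG.kontw _ _ _ _ _ hk
      subst haeq
      have hc1 := hACcall (y := x) (f := f2) (ae := ae2) (e₁ := e) (ρ₁ := ρκ)
        (aκ := aκ) hclo2
      have hcR : Reach alloc e0 ξ' aκ (Exp.letCall x f2 ae2 e) ρκ :=
        hreachlift (hG.reach _ _ _ hcaller2)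
      have hk' : ((x, e, ρκ), aκ) ∈ ξ'.σκ
          (some (eκ2, upd ρlam2 x2 (alloc x2 ⟨Exp.letCall x f2 ae2 e, ρκ, ξ'.σ, ξ'.σκ, aκ⟩))) := by
        rw [← hc1]
        exact hσκmono _ hk
      have hinner : Reach alloc e0 ξ'
          (some (eκ2, upd ρlam2 x2 (alloc x2 ⟨Exp.letCall x f2 ae2 e, ρκ, ξ'.σ, ξ'.σκ, aκ⟩)))
          (Exp.ret ae) ρ₀ := by
        rw [← hc1]
        exact hreachlift (hG.reach _ _ _ hret)
      have hret2 := hACret (ae := ae) (ρ := ρ₀) hk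
      have hm' : (e, upd ρκ x (alloc x ⟨Exp.ret ae, ρ₀, ξ'.σ, ξ'.σκ,
          some (eκ2, upd ρlam2 x2 (alloc x2 ⟨Exp.letCall x f2 ae2 e, ρκ, ξ'.σ, ξ'.σκ, aκ⟩))⟩), aκ)
          ∈ ξ'.r := by
        rw [← hc1, ← hret2]
        exact hc
      have hfinal := Reach.step hcR (aeval_mono hσmono hclo2) hk' hinner hm'
      rw [hret2, hc1]
      exact hfinal
  -- halt address stays empty
  have hhalt' : ∀ k : KontF Var Addr, k ∉ ξ'.σκ (none : KAddrF Var Addr) := by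
    intro k hk
    rcases hσκ_cases hk with h | ⟨y, f, ae, e, ρ, aκ, x, eb, ρlam, _, _, haeq, _⟩
    · exact hG.halt_empty k h
    · exact Option.some_ne_none _ haeq.symm
  -- every reachable non-halt address has a continuation
  have hentryK' : ∀ (e : Exp Var) (ρ : EnvF Var Addr) (p : Exp Var × EnvF Var Addr),
      (e, ρ, (some p : KAddrF Var Addr)) ∈ ξ'.r → ∃ k, k ∈ ξ'.σκ (some p : KAddrF Var Addr) := by
    intro e ρ p hc
    rcases hsucc_cases hc with h | ⟨y, f, ae, e₁, ρ₁, aκ₂, x, eb, ρlam, hcaller, hclo, heq⟩ |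
      ⟨ae, ρ₀, aκ₀, x, e₁, ρκ, aκ', hret, hk, heq⟩
    · exfalso
      simp only [initConfF, Prod.mk.injEq] at h
      exact Option.some_ne_none _ h.2.2
    · simp only [Prod.mk.injEq] at heq
      obtain ⟨rfl, rfl, h3⟩ := heq
      rw [Option.some.injEq] at h3
      subst h3
      refine ⟨((y, e₁, ρ₁), aκ₂), hsuccσκ _ hcaller (StepF.call hclo) _ ?_⟩
      exact mem_joinOne_self rfl
    · simp only [Prod.mk.injEq] at heq
      obtain ⟨rfl, rfl, rfl⟩ := heq
      obtain ⟨f2, ae2, x2, eκ2, ρlam2, hclo2, haeq, hcaller2⟩ := hG.kontw _ _ _ _ _ hk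
      obtain ⟨k2, hk2⟩ := hG.entryK _ _ _ hcaller2
      exact ⟨k2, hσκmono _ hk2⟩
  -- implied-stack existence
  have hgstack' : ∀ (e : Exp Var) (ρ : EnvF Var Addr) (aκ : KAddrF Var Addr),
      (e, ρ, aκ) ∈ ξ'.r → ∃ ψ, Implied ξ'.σκ aκ ψ := by
    intro e ρ aκ hc
    rcases hsucc_cases hc with h | ⟨y, f, ae, e₁, ρ₁, aκ₂, x, eb, ρlam, hcaller, hclo, heq⟩ |
      ⟨ae, ρ₀, aκ₀, x, e₁, ρκ, aκ', hret, hk, heq⟩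
    · simp only [initConfF, Prod.mk.injEq] at h
      obtain ⟨rfl, rfl, rfl⟩ := h
      exact ⟨[], Implied.halt⟩
    · simp only [Prod.mk.injEq] at heq
      obtain ⟨rfl, rfl, rfl⟩ := heq
      obtain ⟨ψc, hψc⟩ := hG.gstack _ _ _ hcaller
      exact ⟨_, Implied.cons (hsuccσκ _ hcaller (StepF.call hclo) _
        (mem_joinOne_self rfl)) (himono hψc) (by simp [ahalt])⟩
    · simp only [Prod.mk.injEq] at heq
      obtain ⟨rfl, rfl, rfl⟩ := heq
      obtain ⟨f2, ae2, x2, eκ2, ρlam2, hclo2, haeq, hcaller2⟩ := hG.kontw _ _ _ _ _ hk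
      obtain ⟨ψc, hψc⟩ := hG.gstack _ _ _ hcaller2
      exact ⟨ψc, himono hψc⟩
  -- continuation provenance for ξ'
  have hkontw' : ∀ (aκ : KAddrF Var Addr) (y : Var) (e₁ : Exp Var) (ρ₁ : EnvF Var Addr)
      (aκ₂ : KAddrF Var Addr), ((y, e₁, ρ₁), aκ₂) ∈ ξ'.σκ aκ →
      ∃ (f ae : AExp Var) (x : Var) (eκ : Exp Var) (ρlam : EnvF Var Addr),
        (Lam.mk x eκ, ρlam) ∈ aeval f ρ₁ ξ'.σ ∧
        aκ = some (eκ, upd ρlam x (alloc x ⟨Exp.letCall y f ae e₁, ρ₁, ξ'.σ, ξ'.σκ, aκ₂⟩)) ∧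
        (Exp.letCall y f ae e₁, ρ₁, aκ₂) ∈ ξ'.r := by
    intro aκ y e₁ ρ₁ aκ₂ hk
    obtain ⟨f, ae, x, eκ, ρlam, hclo, haeq, hcaller⟩ := hkont_data hk
    refine ⟨f, ae, x, eκ, ρlam, aeval_mono hσmono hclo, ?_, hrmono hcaller⟩
    rw [haeq, hACcall hclo]
  -- value-store provenance for ξ'
  have hclow' : ∀ (a : Addr) (clo : CloF Var Addr), clo ∈ ξ'.σ a →
      ∃ c ∈ ξ'.r, ∃ c' ∈ ξ'.r, SubStepFWithClo alloc (stateOfF ξ' c) (stateOfF ξ' c') a clo := by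
    intro a clo hclo
    rcases hσ_cases hclo with h | ⟨y, f, ae, e₁, ρ₁, aκ₂, x, eb, ρlam, hcaller, hcl, haeq, hmem⟩ |
      ⟨ae, ρ₀, aκ₀, x, e₁, ρκ, aκ', hret, hk, haeq, hmem⟩
    · obtain ⟨c, hc, c', hc', σ₁, σκ₁, σ₂, σκ₂, hst, h1, h2, h3, h4, h5⟩ := hG.clow a clo h
      exact ⟨c, hrmono hc, c', hrmono hc', σ₁, σκ₁, σ₂, σκ₂, hst,
        subStore_trans h1 hσmono, subStore_trans h2 hσκmono,
        subStore_trans h3 hσmono, subStore_trans h4 hσκmono, h5⟩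
    · subst haeq
      refine ⟨(Exp.letCall y f ae e₁, ρ₁, aκ₂), hrmono hcaller,
        _, hsuccR _ hcaller (StepF.call hcl),
        ξ.σ, ξ.σκ, _, _, StepF.call hcl, hσmono, hσκmono,
        hsuccσ _ hcaller (StepF.call hcl), hsuccσκ _ hcaller (StepF.call hcl),
        mem_joinOne_self hmem⟩
    · subst haeq
      refine ⟨(Exp.ret ae, ρ₀, aκ₀), hrmono hret,
        _, hsuccR _ hret (StepF.ret hk),
        ξ.σ, ξ.σκ, _, _, StepF.ret hk, hσmono, hσκmono,
        hsuccσ _ hret (StepF.ret hk), hσκmono,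
        mem_joinOne_self hmem⟩
  -- store precision for ξ'
  have hrprec : RPrec HA ξh.r ξ.r ξ.σκ := rprec_of_good hAE hfix hG
  have hsprec' : StorePrec HA ξh.σ ξ'.σ := by
    intro a clo hclo
    rcases hσ_cases hclo with h | ⟨y, f, ae, e₁, ρ₁, aκ₂, x, eb, ρlam, hcaller, hcl, haeq, hmem⟩ |
      ⟨ae, ρ₀, aκ₀, x, e₁, ρκ, aκ', hret, hk, haeq, hmem⟩
    · exact hG.sprec a clo h
    · subst haeq
      obtain ⟨ψ, hψ⟩ := hG.gstack _ _ _ hcaller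
      have hch := hrprec _ _ _ _ hcaller hψ
      have hstH := StepH.call (halloc := halloc) (y := y) (ae := ae) (e := e₁)
        (κ := HKont HA ψ) (aeval_conv HA hG.sprec hcl)
      have hfs := fix_step_mem hfix hch hstH
      have hAe : halloc x ⟨Exp.letCall y f ae e₁, HEnv HA ρ₁, ξh.σ, HKont HA ψ⟩
          = HA (alloc x ⟨Exp.letCall y f ae e₁, ρ₁, ξ.σ, ξ.σκ, aκ₂⟩) :=
        hAE x _ _ _ _ _ _ _ hG.sprec hψ
      have hmm : (clo.1, HEnv HA clo.2) ∈
          joinOne ξh.σ (halloc x ⟨Exp.letCall y f ae e₁, HEnv HA ρ₁, ξh.σ, HKont HA ψ⟩)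
            (aeval ae (HEnv HA ρ₁) ξh.σ)
            (halloc x ⟨Exp.letCall y f ae e₁, HEnv HA ρ₁, ξh.σ, HKont HA ψ⟩) :=
        mem_joinOne_self (aeval_conv HA hG.sprec hmem)
      have h2 := hfs.2 _ hmm
      rw [hAe] at h2
      exact h2
    · subst haeq
      obtain ⟨f2, ae2, x2, eκ2, ρlam2, hclo2, haeq2, hcaller2⟩ := hG.kontw _ _ _ _ _ hk
      obtain ⟨ψ₂, hψ₂⟩ := hG.gstack _ _ _ hcaller2
      have hne : aκ₀ ≠ ahalt := kont_ne_halt hG.halt_empty hk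
      have hψ : Implied ξ.σκ aκ₀ (((x, e₁, ρκ), aκ') :: ψ₂) := Implied.cons hk hψ₂ hne
      have hch := hrprec _ _ _ _ hret hψ
      have hch' : (Exp.ret ae, HEnv HA ρ₀, (x, e₁, HEnv HA ρκ) :: HKont HA ψ₂) ∈ ξh.r := hch
      have hfs := fix_step_mem hfix hch' (StepH.ret (halloc := halloc))
      have hAe : halloc x ⟨Exp.ret ae, HEnv HA ρ₀, ξh.σ, (x, e₁, HEnv HA ρκ) :: HKont HA ψ₂⟩
          = HA (alloc x ⟨Exp.ret ae, ρ₀, ξ.σ, ξ.σκ, aκ₀⟩) :=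
        hAE x _ _ _ _ _ _ (((x, e₁, ρκ), aκ') :: ψ₂) hG.sprec hψ
      have hmm : (clo.1, HEnv HA clo.2) ∈
          joinOne ξh.σ (halloc x ⟨Exp.ret ae, HEnv HA ρ₀, ξh.σ, (x, e₁, HEnv HA ρκ) :: HKont HA ψ₂⟩)
            (aeval ae (HEnv HA ρ₀) ξh.σ)
            (halloc x ⟨Exp.ret ae, HEnv HA ρ₀, ξh.σ, (x, e₁, HEnv HA ρκ) :: HKont HA ψ₂⟩) :=
        mem_joinOne_self (aeval_conv HA hG.sprec hmem)
      have h2 := hfs.2 _ hmm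
      rw [hAe] at h2
      exact h2
  -- instantiation of Reach as finite paths from the entry
  have inst1 : ∀ {aκ : KAddrF Var Addr} {e : Exp Var} {ρ : EnvF Var Addr},
      Reach alloc e0 ξ aκ e ρ → ∀ ψ, Implied ξ'.σκ aκ ψ →
      PathF alloc ξ ξ' (Entry e0 aκ, ψ) ((e, ρ, aκ), ψ) := by
    intro aκ e ρ hR
    induction hR with
    | haltEntry h => intro ψ hψ; exact PathF.refl (hrmono h) hψ
    | entry h => intro ψ hψ; exact PathF.refl (hrmono h) hψ
    | step hcall hclo hkont hret hmem ih₁ ih₂ =>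
      rename_i aκ y x f ae ae₂ e₁ eb ρ₁ ρlam ρ₃
      intro ψ hψ
      have p1 := ih₁ ψ hψ
      have hψ2 : Implied ξ'.σκ
          (some (eb, upd ρlam x (alloc x ⟨Exp.letCall y f ae e₁, ρ₁, ξ.σ, ξ.σκ, aκ⟩)))
          (((y, e₁, ρ₁), aκ) :: ψ) :=
        Implied.cons (hσκmono _ hkont) hψ (by simp [ahalt])
      have p2 : PathF alloc ξ ξ' (Entry e0 aκ, ψ)
          ((eb, upd ρlam x (alloc x ⟨Exp.letCall y f ae e₁, ρ₁, ξ.σ, ξ.σκ, aκ⟩),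
            some (eb, upd ρlam x (alloc x ⟨Exp.letCall y f ae e₁, ρ₁, ξ.σ, ξ.σκ, aκ⟩))),
           ((y, e₁, ρ₁), aκ) :: ψ) :=
        PathF.call p1 (hσκmono _ hkont)
          ⟨ξ.σ, ξ.σκ, _, _, StepF.call hclo, subStore_refl _, subStore_refl _,
            hsuccσ _ (Reach.mem hcall) (StepF.call hclo),
            hsuccσκ _ (Reach.mem hcall) (StepF.call hclo)⟩
      have p4 := pathF_trans p2 (ih₂ _ hψ2)
      exact PathF.ret p4 (Reach.mem hret) hkont (hrmono hmem)
        ⟨ξ.σ, ξ.σκ, _, _, StepF.ret hkont, subStore_refl _, subStore_refl _,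
          hsuccσ _ (Reach.mem hret) (StepF.ret hkont), hσκmono⟩
  -- paths from the initial configuration to any entry with any implied stack
  have hentryPath : ∀ {aκ : KAddrF Var Addr} {ψ : List (KontF Var Addr)},
      Implied ξ'.σκ aκ ψ →
      PathF alloc ξ ξ' (initConfF e0, []) (Entry e0 aκ, ψ) := by
    intro aκ ψ hψ
    induction hψ with
    | halt => exact PathF.refl hinit' Implied.halt
    | cons hk htail hne ih =>
      rename_i φ aκ₂ aκ ψ₂
      obtain ⟨y, e₁, ρ₁⟩ := φ
      obtain ⟨f, ae, x, eκ, ρlam, hclo, haeq, hcaller⟩ := hkont_data hk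
      subst haeq
      have seg := inst1 (hG.reach _ _ _ hcaller) ψ₂ htail
      have p1 := pathF_trans ih seg
      exact PathF.call p1 hk
        ⟨ξ.σ, ξ.σκ, _, _, StepF.call hclo, subStore_refl _, subStore_refl _,
          hsuccσ _ hcaller (StepF.call hclo), hsuccσκ _ hcaller (StepF.call hclo)⟩
  -- wf_r̃
  have hwfr : ∀ c ∈ ξ'.r, ∃ ψ, Implied ξ'.σκ c.2.2 ψ ∧
      PathF alloc ξ ξ' (initConfF e0, []) (c, ψ) := by
    intro c hc
    rcases hsucc_cases hc with h | ⟨y, f, ae, e₁, ρ₁, aκ₂, x, eb, ρlam, hcaller, hclo, heq⟩ |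
      ⟨ae, ρ₀, aκ₀, x, e₁, ρκ, aκ', hret, hk, heq⟩
    · subst h
      exact ⟨[], Implied.halt, PathF.refl hinit' Implied.halt⟩
    · subst heq
      obtain ⟨ψc, hψc⟩ := hG.gstack _ _ _ hcaller
      have hknew : ((y, e₁, ρ₁), aκ₂) ∈ ξ'.σκ
          (some (eb, upd ρlam x (alloc x ⟨Exp.letCall y f ae e₁, ρ₁, ξ.σ, ξ.σκ, aκ₂⟩))) :=
        hsuccσκ _ hcaller (StepF.call hclo) _ (mem_joinOne_self rfl)
      have hψ' : Implied ξ'.σκ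
          (some (eb, upd ρlam x (alloc x ⟨Exp.letCall y f ae e₁, ρ₁, ξ.σ, ξ.σκ, aκ₂⟩)))
          (((y, e₁, ρ₁), aκ₂) :: ψc) :=
        Implied.cons hknew (himono hψc) (by simp [ahalt])
      exact ⟨_, hψ', hentryPath hψ'⟩
    · subst heq
      obtain ⟨f2, ae2, x2, eκ2, ρlam2, hclo2, haeq2, hcaller2⟩ := hG.kontw _ _ _ _ _ hk
      obtain ⟨ψ₀, hψ₀⟩ := hG.gstack _ _ _ hcaller2
      have hψ₀' := himono hψ₀
      have hne : aκ₀ ≠ ahalt := kont_ne_halt hG.halt_empty hk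
      have hψs : Implied ξ'.σκ aκ₀ (((x, e₁, ρκ), aκ') :: ψ₀) :=
        Implied.cons (hσκmono _ hk) hψ₀' hne
      have p1 := hentryPath hψs
      have seg := inst1 (hG.reach _ _ _ hret) _ hψs
      have p2 := pathF_trans p1 seg
      exact ⟨ψ₀, hψ₀', PathF.ret p2 hret hk hc
        ⟨ξ.σ, ξ.σκ, _, _, StepF.ret hk, subStore_refl _, subStore_refl _,
          hsuccσ _ hret (StepF.ret hk), hσκmono⟩⟩
  -- wf_σ̃
  have hwfσ : ∀ (a : Addr) (clo : CloF Var Addr), clo ∈ ξ'.σ a →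
      ∃ c ∈ ξ.r, ∃ c' ∈ ξ'.r, SubStepFWithClo alloc (stateOfF ξ c) (stateOfF ξ' c') a clo := by
    intro a clo hclo
    rcases hσ_cases hclo with h | ⟨y, f, ae, e₁, ρ₁, aκ₂, x, eb, ρlam, hcaller, hcl, haeq, hmem⟩ |
      ⟨ae, ρ₀, aκ₀, x, e₁, ρκ, aκ', hret, hk, haeq, hmem⟩
    · obtain ⟨c, hc, c', hc', σ₁, σκ₁, σ₂, σκ₂, hst, h1, h2, h3, h4, h5⟩ := hG.clow a clo h
      exact ⟨c, hc, c', hrmono hc', σ₁, σκ₁, σ₂, σκ₂, hst, h1, h2,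
        subStore_trans h3 hσmono, subStore_trans h4 hσκmono, h5⟩
    · subst haeq
      exact ⟨(Exp.letCall y f ae e₁, ρ₁, aκ₂), hcaller,
        _, hsuccR _ hcaller (StepF.call hcl),
        ξ.σ, ξ.σκ, _, _, StepF.call hcl, subStore_refl _, subStore_refl _,
        hsuccσ _ hcaller (StepF.call hcl), hsuccσκ _ hcaller (StepF.call hcl),
        mem_joinOne_self hmem⟩
    · subst haeq
      exact ⟨(Exp.ret ae, ρ₀, aκ₀), hret,
        _, hsuccR _ hret (StepF.ret hk),
        ξ.σ, ξ.σκ, _, _, StepF.ret hk, subStore_refl _, subStore_refl _,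
        hsuccσ _ hret (StepF.ret hk), hσκmono,
        mem_joinOne_self hmem⟩
  -- wf_σ̃κ
  have hwfσκ : ∀ (aκ' : KAddrF Var Addr) (x : Var) (e : Exp Var) (ρκ : EnvF Var Addr)
      (aκ : KAddrF Var Addr), ((x, e, ρκ), aκ) ∈ ξ'.σκ aκ' →
      ∃ (eκ' : Exp Var) (ρκ' : EnvF Var Addr), aκ' = some (eκ', ρκ') ∧
        Entry e0 aκ' ∈ ξ'.r ∧
        ∃ (f ae : AExp Var), (Exp.letCall x f ae e, ρκ, aκ) ∈ ξ.r ∧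
          SubStepFWithKont alloc ⟨Exp.letCall x f ae e, ρκ, ξ.σ, ξ.σκ, aκ⟩
            ⟨eκ', ρκ', ξ'.σ, ξ'.σκ, aκ'⟩ aκ' ((x, e, ρκ), aκ) := by
    intro aκ' x e ρκ aκ hk
    obtain ⟨f, ae, x2, eκ, ρlam, hclo, haeq, hcaller⟩ := hkont_data hk
    subst haeq
    refine ⟨eκ, upd ρlam x2 (alloc x2 ⟨Exp.letCall x f ae e, ρκ, ξ.σ, ξ.σκ, aκ⟩), rfl,
      hsuccR _ hcaller (StepF.call hclo), f, ae, hcaller,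
      ξ.σ, ξ.σκ, _, _, StepF.call hclo, subStore_refl _, subStore_refl _,
      hsuccσ _ hcaller (StepF.call hclo), hsuccσκ _ hcaller (StepF.call hclo),
      mem_joinOne_self rfl⟩
  -- assembly
  exact ⟨⟨ξ, WF.step hWF hXi
      ⟨⟨hrmono, hσmono, hσκmono⟩, hinit', hhalt', hwfr, hwfσ, hwfσκ⟩⟩,
    hinit', hhalt', hentryK', hgstack', hreach', hkontw', hclow', hsprec'⟩

end Aux4

end P4F


namespace P4F

/-- **Precision of analysis results** (Theorem 1).
If the finite-state widened result `ξ̃` is obtained by zero or more `⤳̃Ξ` steps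
from the initial result `({(e₀, ∅, ã_halt)}, ⊥, ⊥)` and `ξ̂` is a fixed point of
the unbounded-stack widened transfer relation `⤳̂Ξ`, then `ξ̂ ⊒Ξ ξ̃`. -/
theorem precision_of_analysis_results
    {Var Addr HAddr : Type} (e0 : Exp Var)
    (alloc : Var → StateF Var Addr → Addr)
    (halloc : Var → StateH Var HAddr → HAddr)
    (HA : Addr ≃ HAddr)
    (hAllocEquiv : AllocEquiv HA alloc halloc)
    (hAllocConsistent : AllocConsistent alloc e0)
    (ξt : XiF Var Addr)
    (hreach : Relation.ReflTransGen (XiStepF alloc e0) (initXiF e0) ξt)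
    (ξh : XiH Var HAddr)
    (hfix : XiStepH halloc e0 ξh ξh) :
    XiPrec HA ξh ξt := by
  have hGood : Good alloc e0 HA ξh ξt := by
    induction hreach with
    | refl => exact good_init
    | tail _ hstep ih => exact good_step hAllocEquiv hAllocConsistent hfix ih hstep
  exact ⟨rprec_of_good hAllocEquiv hfix hGood, hGood.sprec⟩

end P4F
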